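/- Assume in addition that ρ₀ is integrable on [0,∞). Then for every t > 0: the function x ↦ m(x,t) is nondecreasing on (0,∞), m(0,t) = −∫₀^t ρ_b(η) u_b(η) dη, and the total mass is conserved: lim_{x → ∞} m(x,t) − m(0,t) = ∫₀^∞ ρ₀(x) dx + ∫₀^t ρ_b(η) u_b(η) dη. -/

import Mathlib

open MeasureTheory Set Filter

noncomputable def Fpot (ρ0 u0 : ℝ → ℝ) (y x t : ℝ) : ℝ :=
  ∫ η in (0:ℝ)..y, (t * u0 η + η - x) * ρ0 η

noncomputable def Gpot (ρb ub : ℝ → ℝ) (τ x t : ℝ) : ℝ :=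
  ∫ η in (0:ℝ)..τ, (x - ub η * (t - η)) * (ρb η * ub η)

/-- `a` minimizes `f` over `[0, ∞)`. -/
def MinimizesOn (f : ℝ → ℝ) (a : ℝ) : Prop :=
  0 ≤ a ∧ ∀ b, 0 ≤ b → f a ≤ f b

/-- `a` is the smallest minimizer of `f` over `[0, ∞)`. -/
def SmallestMinimizer (f : ℝ → ℝ) (a : ℝ) : Prop :=
  MinimizesOn f a ∧ ∀ b, MinimizesOn f b → a ≤ b

/-- `a` is the largest minimizer of `f` over `[0, ∞)`. -/
def LargestMinimizer (f : ℝ → ℝ) (a : ℝ) : Prop :=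
  MinimizesOn f a ∧ ∀ b, MinimizesOn f b → b ≤ a

/-- `v` is the (attained) minimum value of `f` over `[0, ∞)`. -/
def IsMinValue (f : ℝ → ℝ) (v : ℝ) : Prop :=
  (∃ a, 0 ≤ a ∧ f a = v) ∧ ∀ b, 0 ≤ b → v ≤ f b

open Classical in
/-- The mass potential `m(x, t)`. -/
noncomputable def mpot (ρ0 ρb ub : ℝ → ℝ) (Fm Gm ys τs : ℝ → ℝ → ℝ) (x t : ℝ) : ℝ :=
  if Fm x t ≤ Gm x t ∧ 0 < x then ∫ η in (0:ℝ)..ys x t, ρ0 η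
  else - ∫ η in (0:ℝ)..τs x t, ρb η * ub η

open Classical in
/-- The momentum potential `q(x, t)`. -/
noncomputable def qpot (ρ0 u0 ρb ub : ℝ → ℝ) (Fm Gm ys τs : ℝ → ℝ → ℝ) (x t : ℝ) : ℝ :=
  if Fm x t ≤ Gm x t then ∫ η in (0:ℝ)..ys x t, ρ0 η * u0 η
  else - ∫ η in (0:ℝ)..τs x t, ρb η * ub η ^ 2

/-- `μ(x,t) = min (F(x,t), G(x,t))`. -/
noncomputable def μpot (Fm Gm : ℝ → ℝ → ℝ) (x t : ℝ) : ℝ := min (Fm x t) (Gm x t)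

/-!
Up to terms independent of `x`, `F(·, x, t)` is `-x` times the initial mass `∫₀^y ρ₀` and
`G(·, x, t)` is `x` times the boundary mass `∫₀^τ ρ_b u_b`. Both masses increase, so as `x` grows
the smallest minimizer `y_*` increases, `τ_*` decreases, `F(x,t)` decreases and `G(x,t)` increases;
in particular once the `F`-branch of `m` is chosen it stays chosen, which gives monotonicity.
At `x = 0` the integrand of `G` is negative before `τ = t` and positive after, so `τ_*(0,t) = t`.
For `x ≥ t · sup u_b` the integrand of `G` is nonnegative, so `G(x,t) ≥ 0 > F(x,t)` eventually,
and `y_* → ∞` because staying below a fixed `Y` costs a penalty linear in `x`; hence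
`m(x,t) = ∫₀^{y_*} ρ₀ → ∫₀^∞ ρ₀`.
-/

theorem IsMinValue.le_of_le {f g : ℝ → ℝ} {v w : ℝ} (hf : IsMinValue f v)
    (hg : IsMinValue g w) (hfg : ∀ y, 0 ≤ y → f y ≤ g y) : v ≤ w := by
  obtain ⟨⟨a, ha, rfl⟩, -⟩ := hg
  exact (hf.2 a ha).trans (hfg a ha)

theorem SmallestMinimizer.le_of_antitoneOn_sub {f₁ f₂ : ℝ → ℝ} {a₁ a₂ : ℝ}
    (h₁ : SmallestMinimizer f₁ a₁) (h₂ : MinimizesOn f₂ a₂)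
    (hd : AntitoneOn (fun y => f₂ y - f₁ y) (Ici 0)) : a₁ ≤ a₂ := by
  by_contra! hlt
  have hstrict : f₁ a₁ < f₁ a₂ := by
    by_contra! hle
    exact hlt.not_ge (h₁.2 a₂ ⟨h₂.1, fun b hb => hle.trans (h₁.1.2 b hb)⟩)
  have hmin : f₂ a₂ ≤ f₂ a₁ := h₂.2 a₁ h₁.1.1
  have hanti : f₂ a₁ - f₁ a₁ ≤ f₂ a₂ - f₁ a₂ := hd h₂.1 h₁.1.1 hlt.le
  linarith

theorem tendsto_atTop_of_minimizesOn_sub_mul {f : ℝ → ℝ → ℝ} {R y : ℝ → ℝ}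
    (hf : ∀ x η, 0 ≤ η → f x η = f 0 η - x * R η)
    (hbdd : ∀ Y, 0 ≤ Y → BddBelow (f 0 '' Icc 0 Y)) (hR : StrictMonoOn R (Ici 0))
    (hy : ∀ x, 0 ≤ x → MinimizesOn (f x) (y x)) : Tendsto y atTop atTop := by
  refine tendsto_atTop.2 fun Y₀ => ?_
  set Y := max Y₀ 0
  have hY : 0 ≤ Y := le_max_right _ _
  obtain ⟨L, hL⟩ := hbdd Y hY
  have hδ : 0 < R (Y + 1) - R Y := sub_pos.2 (hR hY (mem_Ici.2 (by linarith)) (by linarith))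
  filter_upwards [eventually_gt_atTop ((f 0 (Y + 1) - L) / (R (Y + 1) - R Y)),
    eventually_ge_atTop 0] with x hx hx0
  by_contra! hlt
  obtain ⟨hy0, hymin⟩ := hy x hx0
  have hyY : y x ≤ Y := hlt.le.trans (le_max_left _ _)
  have hmin := hymin (Y + 1) (by linarith)
  rw [hf x _ hy0, hf x _ (by linarith)] at hmin
  have hLy : L ≤ f 0 (y x) := hL ⟨y x, ⟨hy0, hyY⟩, rfl⟩
  have hRy : R (y x) ≤ R Y := hR.monotoneOn hy0 hY hyY
  rw [div_lt_iff₀ hδ] at hx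
  nlinarith [mul_nonneg hx0 (sub_nonneg.2 hRy)]

theorem strictMonoOn_primitive {g : ℝ → ℝ} {a : ℝ}
    (hg : ∀ x, a ≤ x → IntervalIntegrable g volume a x) (hpos : ∀ x, a ≤ x → 0 < g x) :
    StrictMonoOn (fun x => ∫ y in a..x, g y) (Ici a) := by
  intro x₁ h₁ x₂ h₂ hlt
  rw [← sub_pos, intervalIntegral.integral_interval_sub_left (hg x₂ h₂) (hg x₁ h₁)]
  exact intervalIntegral.intervalIntegral_pos_of_pos_on ((hg x₁ h₁).symm.trans (hg x₂ h₂))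
    (fun x hx => hpos x (le_trans h₁ hx.1.le)) hlt

theorem integral_lt_integral_of_neg_of_pos {g : ℝ → ℝ} {a b c : ℝ}
    (hg : ∀ x, a ≤ x → IntervalIntegrable g volume a x)
    (hneg : ∀ x ∈ Ioo a c, g x < 0) (hpos : ∀ x ∈ Ioi c, 0 < g x)
    (hac : a ≤ c) (hab : a ≤ b) (hbc : b ≠ c) :
    ∫ x in a..c, g x < ∫ x in a..b, g x := by
  rw [← sub_pos, intervalIntegral.integral_interval_sub_left (hg b hab) (hg c hac)]
  have hcb : IntervalIntegrable g volume c b := (hg c hac).symm.trans (hg b hab)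
  rcases hbc.lt_or_gt with hlt | hlt
  · rw [intervalIntegral.integral_symm, ← intervalIntegral.integral_neg]
    exact intervalIntegral.intervalIntegral_pos_of_pos_on hcb.symm.neg
      (fun x hx => neg_pos.2 (hneg x ⟨hab.trans_lt hx.1, hx.2⟩)) hlt
  · exact intervalIntegral.intervalIntegral_pos_of_pos_on hcb (fun x hx => hpos x hx.1) hlt

theorem intervalIntegrable_of_abs_le {f : ℝ → ℝ} {a b C : ℝ} (hab : a ≤ b)
    (hf : Measurable f) (hC : ∀ x ∈ Ioc a b, |f x| ≤ C) : IntervalIntegrable f volume a b :=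
  (intervalIntegrable_iff_integrableOn_Ioc_of_le hab).2 <|
    Measure.integrableOn_of_bounded measure_Ioc_lt_top.ne hf.aestronglyMeasurable
      (ae_restrict_of_forall_mem measurableSet_Ioc (by simpa using hC))

theorem IntervalIntegrable.bdd_mul {f g : ℝ → ℝ} {a b C : ℝ} (hab : a ≤ b)
    (hg : IntervalIntegrable g volume a b) (hf : Measurable f) (hC : ∀ x ∈ Ioc a b, |f x| ≤ C) :
    IntervalIntegrable (fun x => f x * g x) volume a b := by
  rw [intervalIntegrable_iff_integrableOn_Ioc_of_le hab] at hg ⊢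
  exact hg.bdd_mul hf.aestronglyMeasurable
    (ae_restrict_of_forall_mem measurableSet_Ioc (by simpa using hC))

theorem MonotoneOn.ite_of_le {α β : Type*} [Preorder α] [Preorder β] {s : Set α}
    {p : α → Prop} [DecidablePred p] {f g : α → β} (hf : MonotoneOn f s) (hg : MonotoneOn g s)
    (hp : ∀ x ∈ s, ∀ y ∈ s, x ≤ y → p x → p y) (hgf : ∀ x ∈ s, ∀ y ∈ s, x ≤ y → g x ≤ f y) :
    MonotoneOn (fun x => if p x then f x else g x) s := by
  intro x hx y hy hxy
  by_cases hpx : p x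
  · simp only [if_pos hpx, if_pos (hp x hx y hy hxy hpx)]
    exact hf hx hy hxy
  by_cases hpy : p y
  · simp only [if_neg hpx, if_pos hpy]
    exact hgf x hx y hy hxy
  · simp only [if_neg hpx, if_neg hpy]
    exact hg hx hy hxy

theorem intervalIntegrable_mul_of_locallyBounded {f g : ℝ → ℝ} (hf : Measurable f)
    (hg : Measurable g) (hf_pos : ∀ η, 0 ≤ η → 0 < f η)
    (hf_loc : ∀ K : ℝ, ∃ M : ℝ, ∀ η ∈ Icc (0:ℝ) K, f η ≤ M)
    (hg_bdd : ∃ M : ℝ, ∀ η, 0 ≤ η → |g η| ≤ M) {τ : ℝ} (hτ : 0 ≤ τ) :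
    IntervalIntegrable (fun η => f η * g η) volume 0 τ := by
  obtain ⟨M, hM⟩ := hf_loc τ
  obtain ⟨N, hN⟩ := hg_bdd
  refine (intervalIntegrable_of_abs_le hτ hg fun η hη => hN η hη.1.le).bdd_mul hτ hf (C := M)
    fun η hη => ?_
  rw [abs_of_pos (hf_pos η hη.1.le)]
  exact hM η ⟨hη.1.le, hη.2⟩

section Potentials

variable {ρ0 u0 ρb ub : ℝ → ℝ} {t : ℝ}

theorem Fpot_sub_Fpot {y x₁ x₂ : ℝ}
    (h₁ : IntervalIntegrable (fun η => (t * u0 η + η - x₁) * ρ0 η) volume 0 y)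
    (h₂ : IntervalIntegrable (fun η => (t * u0 η + η - x₂) * ρ0 η) volume 0 y) :
    Fpot ρ0 u0 y x₂ t - Fpot ρ0 u0 y x₁ t = (x₁ - x₂) * ∫ η in (0:ℝ)..y, ρ0 η := by
  rw [Fpot, Fpot, ← intervalIntegral.integral_sub h₂ h₁, ← intervalIntegral.integral_const_mul]
  congr 1 with η
  ring

theorem Gpot_sub_Gpot {τ x₁ x₂ : ℝ}
    (h₁ : IntervalIntegrable (fun η => (x₁ - ub η * (t - η)) * (ρb η * ub η)) volume 0 τ)
    (h₂ : IntervalIntegrable (fun η => (x₂ - ub η * (t - η)) * (ρb η * ub η)) volume 0 τ) :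
    Gpot ρb ub τ x₂ t - Gpot ρb ub τ x₁ t = (x₂ - x₁) * ∫ η in (0:ℝ)..τ, ρb η * ub η := by
  rw [Gpot, Gpot, ← intervalIntegral.integral_sub h₂ h₁, ← intervalIntegral.integral_const_mul]
  congr 1 with η
  ring

theorem intervalIntegrable_Fpot_integrand (hu0 : Measurable u0)
    (hu0_bdd : ∃ M : ℝ, ∀ η, 0 ≤ η → |u0 η| ≤ M) {y : ℝ} (hρ0 : IntervalIntegrable ρ0 volume 0 y)
    (x : ℝ) (hy : 0 ≤ y) :
    IntervalIntegrable (fun η => (t * u0 η + η - x) * ρ0 η) volume 0 y := by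
  obtain ⟨M, hM⟩ := hu0_bdd
  refine hρ0.bdd_mul hy (by fun_prop) (C := |t| * M + y + |x|) fun η hη => ?_
  have hu : |t * u0 η| ≤ |t| * M := by
    rw [abs_mul]
    exact mul_le_mul_of_nonneg_left (hM η hη.1.le) (abs_nonneg t)
  rw [abs_le] at hu ⊢
  constructor <;> linarith [neg_abs_le x, le_abs_self x, hη.1, hη.2]

theorem intervalIntegrable_Gpot_integrand (hub : Measurable ub)
    (hub_bdd : ∃ M : ℝ, ∀ η, 0 ≤ η → |ub η| ≤ M) {τ : ℝ}
    (hS : IntervalIntegrable (fun η => ρb η * ub η) volume 0 τ) (x : ℝ) (hτ : 0 ≤ τ) :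
    IntervalIntegrable (fun η => (x - ub η * (t - η)) * (ρb η * ub η)) volume 0 τ := by
  obtain ⟨M, hM⟩ := hub_bdd
  refine hS.bdd_mul hτ (by fun_prop) (C := |x| + M * (|t| + τ)) fun η hη => ?_
  have ht : |t - η| ≤ |t| + τ := by
    rw [abs_le]
    constructor <;> linarith [neg_abs_le t, le_abs_self t, hη.1, hη.2]
  have hu : |ub η * (t - η)| ≤ M * (|t| + τ) := by
    rw [abs_mul]
    exact mul_le_mul (hM η hη.1.le) ht (abs_nonneg _) ((abs_nonneg _).trans (hM η hη.1.le))
  exact (abs_sub _ _).trans (by linarith)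

theorem Gpot_nonneg {Mb x τ : ℝ} (hρb_pos : ∀ η, 0 ≤ η → 0 < ρb η)
    (hub_pos : ∀ η, 0 ≤ η → 0 < ub η) (hMb : ∀ η, 0 ≤ η → |ub η| ≤ Mb) (ht : 0 ≤ t)
    (hx : Mb * t ≤ x) (hτ : 0 ≤ τ) : 0 ≤ Gpot ρb ub τ x t := by
  refine intervalIntegral.integral_nonneg hτ fun η hη => ?_
  have hub := hub_pos η hη.1
  have hdecay : ub η * (t - η) ≤ ub η * t := by nlinarith [hη.1]
  have hbound : ub η * t ≤ Mb * t :=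
    mul_le_mul_of_nonneg_right ((le_abs_self _).trans (hMb η hη.1)) ht
  exact mul_nonneg (by linarith) (mul_pos (hρb_pos η hη.1) hub).le

/-- At `x = 0` the boundary potential decreases until `τ = t` and increases afterwards. -/
theorem eq_of_minimizesOn_Gpot_zero {a : ℝ} (ht : 0 ≤ t) (hρb_pos : ∀ η, 0 ≤ η → 0 < ρb η)
    (hub_pos : ∀ η, 0 ≤ η → 0 < ub η)
    (hint : ∀ τ, 0 ≤ τ →
      IntervalIntegrable (fun η => (0 - ub η * (t - η)) * (ρb η * ub η)) volume 0 τ)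
    (ha : MinimizesOn (fun τ => Gpot ρb ub τ 0 t) a) : a = t := by
  by_contra hne
  refine (ha.2 t ht).not_gt (integral_lt_integral_of_neg_of_pos hint (fun η hη => ?_)
    (fun η hη => ?_) ht ha.1 hne)
  · have hη0 : 0 ≤ η := hη.1.le
    have : 0 < ub η * (t - η) := mul_pos (hub_pos η hη0) (sub_pos.2 hη.2)
    exact mul_neg_of_neg_of_pos (by linarith) (mul_pos (hρb_pos η hη0) (hub_pos η hη0))
  · have hη0 : 0 ≤ η := ht.trans hη.le
    have : ub η * (t - η) < 0 := mul_neg_of_pos_of_neg (hub_pos η hη0) (sub_neg.2 hη)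
    exact mul_pos (by linarith) (mul_pos (hρb_pos η hη0) (hub_pos η hη0))

theorem mpot_monotoneOn {Fm Gm ys τs : ℝ → ℝ → ℝ}
    (hR : MonotoneOn (fun y => ∫ η in (0:ℝ)..y, ρ0 η) (Ici 0))
    (hS : MonotoneOn (fun τ => ∫ η in (0:ℝ)..τ, ρb η * ub η) (Ici 0))
    (hFdiff : ∀ x₁ x₂ y, 0 ≤ y →
      Fpot ρ0 u0 y x₂ t - Fpot ρ0 u0 y x₁ t = (x₁ - x₂) * ∫ η in (0:ℝ)..y, ρ0 η)
    (hGdiff : ∀ x₁ x₂ τ, 0 ≤ τ →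
      Gpot ρb ub τ x₂ t - Gpot ρb ub τ x₁ t = (x₂ - x₁) * ∫ η in (0:ℝ)..τ, ρb η * ub η)
    (hFm : ∀ x, 0 ≤ x → IsMinValue (fun y => Fpot ρ0 u0 y x t) (Fm x t))
    (hGm : ∀ x, 0 ≤ x → IsMinValue (fun τ => Gpot ρb ub τ x t) (Gm x t))
    (hys : ∀ x, 0 ≤ x → SmallestMinimizer (fun y => Fpot ρ0 u0 y x t) (ys x t))
    (hτs : ∀ x, 0 ≤ x → SmallestMinimizer (fun τ => Gpot ρb ub τ x t) (τs x t)) :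
    MonotoneOn (fun x => mpot ρ0 ρb ub Fm Gm ys τs x t) (Ioi 0) := by
  have hR0 : ∀ y, 0 ≤ y → 0 ≤ ∫ η in (0:ℝ)..y, ρ0 η := fun y hy => by
    simpa using hR self_mem_Ici hy hy
  have hS0 : ∀ τ, 0 ≤ τ → 0 ≤ ∫ η in (0:ℝ)..τ, ρb η * ub η := fun τ hτ => by
    simpa using hS self_mem_Ici hτ hτ
  have hys_mono : MonotoneOn (ys · t) (Ioi 0) := fun x₁ hx₁ x₂ hx₂ hx =>
    (hys x₁ hx₁.le).le_of_antitoneOn_sub (hys x₂ hx₂.le).1 fun y₁ hy₁ y₂ hy₂ hy => by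
      have := mul_le_mul_of_nonpos_left (hR hy₁ hy₂ hy) (sub_nonpos.2 hx)
      linarith [hFdiff x₁ x₂ y₁ hy₁, hFdiff x₁ x₂ y₂ hy₂]
  have hτs_anti : AntitoneOn (τs · t) (Ioi 0) := fun x₁ hx₁ x₂ hx₂ hx =>
    (hτs x₂ hx₂.le).le_of_antitoneOn_sub (hτs x₁ hx₁.le).1 fun τ₁ hτ₁ τ₂ hτ₂ hτ => by
      have := mul_le_mul_of_nonneg_left (hS hτ₁ hτ₂ hτ) (sub_nonneg.2 hx)
      linarith [hGdiff x₁ x₂ τ₁ hτ₁, hGdiff x₁ x₂ τ₂ hτ₂]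
  refine MonotoneOn.ite_of_le
    (fun x₁ hx₁ x₂ hx₂ hx => hR (hys x₁ hx₁.le).1.1 (hys x₂ hx₂.le).1.1 (hys_mono hx₁ hx₂ hx))
    (fun x₁ hx₁ x₂ hx₂ hx =>
      neg_le_neg (hS (hτs x₂ hx₂.le).1.1 (hτs x₁ hx₁.le).1.1 (hτs_anti hx₁ hx₂ hx)))
    ?_ fun x₁ hx₁ x₂ hx₂ _ =>
      (neg_nonpos.2 (hS0 _ (hτs x₁ hx₁.le).1.1)).trans (hR0 _ (hys x₂ hx₂.le).1.1)
  rintro x₁ hx₁ x₂ hx₂ hx ⟨hFG, -⟩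
  refine ⟨?_, hx₂⟩
  calc Fm x₂ t ≤ Fm x₁ t := (hFm x₂ hx₂.le).le_of_le (hFm x₁ hx₁.le) fun y hy => by
        nlinarith [hFdiff x₁ x₂ y hy, hR0 y hy]
    _ ≤ Gm x₁ t := hFG
    _ ≤ Gm x₂ t := (hGm x₁ hx₁.le).le_of_le (hGm x₂ hx₂.le) fun τ hτ => by
        nlinarith [hGdiff x₁ x₂ τ hτ, hS0 τ hτ]

theorem eventually_Fm_le_Gm {Fm Gm : ℝ → ℝ → ℝ} {Mb : ℝ} (ht : 0 ≤ t)
    (hρb_pos : ∀ η, 0 ≤ η → 0 < ρb η) (hub_pos : ∀ η, 0 ≤ η → 0 < ub η)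
    (hMb : ∀ η, 0 ≤ η → |ub η| ≤ Mb) (hR₁ : 0 < ∫ η in (0:ℝ)..1, ρ0 η)
    (hFdiff : ∀ x₁ x₂ y, 0 ≤ y →
      Fpot ρ0 u0 y x₂ t - Fpot ρ0 u0 y x₁ t = (x₁ - x₂) * ∫ η in (0:ℝ)..y, ρ0 η)
    (hFm : ∀ x, 0 ≤ x → IsMinValue (fun y => Fpot ρ0 u0 y x t) (Fm x t))
    (hGm : ∀ x, 0 ≤ x → IsMinValue (fun τ => Gpot ρb ub τ x t) (Gm x t)) :
    ∀ᶠ x in atTop, Fm x t ≤ Gm x t ∧ 0 < x := by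
  filter_upwards [eventually_gt_atTop (Fpot ρ0 u0 1 0 t / ∫ η in (0:ℝ)..1, ρ0 η),
    eventually_ge_atTop (Mb * t), eventually_gt_atTop 0] with x hxF hxG hx
  obtain ⟨⟨τ, hτ, hGτ⟩, -⟩ := hGm x hx.le
  have hF : Fm x t ≤ Fpot ρ0 u0 1 x t := (hFm x hx.le).2 1 zero_le_one
  have hG : 0 ≤ Gpot ρb ub τ x t := Gpot_nonneg hρb_pos hub_pos hMb ht hxG hτ
  rw [div_lt_iff₀ hR₁] at hxF
  refine ⟨?_, hx⟩
  dsimp only at hGτ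
  linarith [hFdiff 0 x 1 zero_le_one]

theorem tendsto_smallestMinimizer_Fpot_atTop {ys : ℝ → ℝ → ℝ}
    (hR : StrictMonoOn (fun y => ∫ η in (0:ℝ)..y, ρ0 η) (Ici 0))
    (hint : ∀ y, 0 ≤ y → IntervalIntegrable (fun η => (t * u0 η + η - 0) * ρ0 η) volume 0 y)
    (hFdiff : ∀ x₁ x₂ y, 0 ≤ y →
      Fpot ρ0 u0 y x₂ t - Fpot ρ0 u0 y x₁ t = (x₁ - x₂) * ∫ η in (0:ℝ)..y, ρ0 η)
    (hys : ∀ x, 0 ≤ x → SmallestMinimizer (fun y => Fpot ρ0 u0 y x t) (ys x t)) :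
    Tendsto (ys · t) atTop atTop := by
  refine tendsto_atTop_of_minimizesOn_sub_mul (f := fun x y => Fpot ρ0 u0 y x t)
    (fun x y hy => by linarith [hFdiff 0 x y hy]) (fun Y hY => ?_) hR fun x hx => (hys x hx).1
  refine isCompact_Icc.bddBelow_image ?_
  rw [← uIcc_of_le hY]
  exact intervalIntegral.continuousOn_primitive_interval' (hint Y hY) left_mem_uIcc

end Potentials

theorem stmt19_general
    (ρ0 u0 ρb ub : ℝ → ℝ)
    (hu0meas : Measurable u0)
    (hρbmeas : Measurable ρb) (hubmeas : Measurable ub)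
    (hρ0pos : ∀ η, 0 ≤ η → 0 < ρ0 η)
    (hρbpos : ∀ η, 0 ≤ η → 0 < ρb η)
    (hubpos : ∀ η, 0 ≤ η → 0 < ub η)
    (hρbloc : ∀ K : ℝ, ∃ M : ℝ, ∀ η ∈ Set.Icc (0:ℝ) K, ρb η ≤ M)
    (hu0bdd : ∃ M : ℝ, ∀ η, 0 ≤ η → |u0 η| ≤ M)
    (hubbdd : ∃ M : ℝ, ∀ η, 0 ≤ η → |ub η| ≤ M)
    (Fm Gm : ℝ → ℝ → ℝ)
    (hFm : ∀ x t, 0 ≤ x → 0 ≤ t → IsMinValue (fun y => Fpot ρ0 u0 y x t) (Fm x t))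
    (hGm : ∀ x t, 0 ≤ x → 0 ≤ t → IsMinValue (fun τ => Gpot ρb ub τ x t) (Gm x t))
    (ys τs : ℝ → ℝ → ℝ)
    (hys : ∀ x t, 0 ≤ x → 0 ≤ t → SmallestMinimizer (fun y => Fpot ρ0 u0 y x t) (ys x t))
    (hτs : ∀ x t, 0 ≤ x → 0 ≤ t → SmallestMinimizer (fun τ => Gpot ρb ub τ x t) (τs x t))
    (hρ0int : MeasureTheory.IntegrableOn ρ0 (Set.Ici 0))
    (t : ℝ) (ht : 0 < t) :
    MonotoneOn (fun x => mpot ρ0 ρb ub Fm Gm ys τs x t) (Set.Ioi 0) ∧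
    mpot ρ0 ρb ub Fm Gm ys τs 0 t = -∫ η in (0:ℝ)..t, ρb η * ub η ∧
    Filter.Tendsto
      (fun x => mpot ρ0 ρb ub Fm Gm ys τs x t - mpot ρ0 ρb ub Fm Gm ys τs 0 t)
      Filter.atTop
      (nhds ((∫ x in Set.Ioi (0:ℝ), ρ0 x) + ∫ η in (0:ℝ)..t, ρb η * ub η)) := by
  have hρ0 : ∀ y, 0 ≤ y → IntervalIntegrable ρ0 volume 0 y := fun y hy =>
    (intervalIntegrable_iff_integrableOn_Ioc_of_le hy).2
      (hρ0int.mono_set (Ioc_subset_Ioi_self.trans Ioi_subset_Ici_self))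
  have hρbub : ∀ τ, 0 ≤ τ → IntervalIntegrable (fun η => ρb η * ub η) volume 0 τ := fun _ =>
    intervalIntegrable_mul_of_locallyBounded hρbmeas hubmeas hρbpos hρbloc hubbdd
  have hFint := fun x y (hy : 0 ≤ y) =>
    intervalIntegrable_Fpot_integrand (t := t) hu0meas hu0bdd (hρ0 y hy) x hy
  have hGint := fun x τ (hτ : 0 ≤ τ) =>
    intervalIntegrable_Gpot_integrand (t := t) hubmeas hubbdd (hρbub τ hτ) x hτ
  have hFdiff := fun x₁ x₂ y hy => Fpot_sub_Fpot (hFint x₁ y hy) (hFint x₂ y hy)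
  have hGdiff := fun x₁ x₂ τ hτ => Gpot_sub_Gpot (hGint x₁ τ hτ) (hGint x₂ τ hτ)
  have hR := strictMonoOn_primitive hρ0 hρ0pos
  have hS := strictMonoOn_primitive hρbub fun η hη => mul_pos (hρbpos η hη) (hubpos η hη)
  have hm0 : mpot ρ0 ρb ub Fm Gm ys τs 0 t = -∫ η in (0:ℝ)..t, ρb η * ub η := by
    rw [mpot, if_neg fun h => h.2.false, eq_of_minimizesOn_Gpot_zero ht.le hρbpos hubpos
      (hGint 0) (hτs 0 t le_rfl ht.le).1]
  refine ⟨mpot_monotoneOn hR.monotoneOn hS.monotoneOn hFdiff hGdiff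
    (fun x hx => hFm x t hx ht.le) (fun x hx => hGm x t hx ht.le)
    (fun x hx => hys x t hx ht.le) (fun x hx => hτs x t hx ht.le), hm0, ?_⟩
  obtain ⟨Mb, hMb⟩ := hubbdd
  have hbranch := eventually_Fm_le_Gm ht.le hρbpos hubpos hMb
    (by simpa using hR self_mem_Ici (mem_Ici.2 zero_le_one) one_pos) hFdiff
    (fun x hx => hFm x t hx ht.le) (fun x hx => hGm x t hx ht.le)
  have hys_top := tendsto_smallestMinimizer_Fpot_atTop hR (hFint 0) hFdiff
    fun x hx => hys x t hx ht.le
  refine ((intervalIntegral_tendsto_integral_Ioi 0 (hρ0int.mono_set Ioi_subset_Ici_self)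
    hys_top).add_const _).congr' ?_
  filter_upwards [hbranch] with x hx
  rw [hm0, mpot, if_pos hx, sub_neg_eq_add]

theorem stmt19
    (ρ0 u0 ρb ub : ℝ → ℝ)
    (hρ0meas : Measurable ρ0) (hu0meas : Measurable u0)
    (hρbmeas : Measurable ρb) (hubmeas : Measurable ub)
    (hρ0pos : ∀ η, 0 ≤ η → 0 < ρ0 η)
    (hρbpos : ∀ η, 0 ≤ η → 0 < ρb η)
    (hubpos : ∀ η, 0 ≤ η → 0 < ub η)
    (hρ0loc : ∀ K : ℝ, ∃ M : ℝ, ∀ η ∈ Set.Icc (0:ℝ) K, ρ0 η ≤ M)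
    (hρbloc : ∀ K : ℝ, ∃ M : ℝ, ∀ η ∈ Set.Icc (0:ℝ) K, ρb η ≤ M)
    (hu0bdd : ∃ M : ℝ, ∀ η, 0 ≤ η → |u0 η| ≤ M)
    (hubbdd : ∃ M : ℝ, ∀ η, 0 ≤ η → |ub η| ≤ M)
    (Fm Gm : ℝ → ℝ → ℝ)
    (hFm : ∀ x t, 0 ≤ x → 0 ≤ t → IsMinValue (fun y => Fpot ρ0 u0 y x t) (Fm x t))
    (hGm : ∀ x t, 0 ≤ x → 0 ≤ t → IsMinValue (fun τ => Gpot ρb ub τ x t) (Gm x t))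
    (ys yS τs τS : ℝ → ℝ → ℝ)
    (hys : ∀ x t, 0 ≤ x → 0 ≤ t → SmallestMinimizer (fun y => Fpot ρ0 u0 y x t) (ys x t))
    (hyS : ∀ x t, 0 ≤ x → 0 ≤ t → LargestMinimizer (fun y => Fpot ρ0 u0 y x t) (yS x t))
    (hτs : ∀ x t, 0 ≤ x → 0 ≤ t → SmallestMinimizer (fun τ => Gpot ρb ub τ x t) (τs x t))
    (hτS : ∀ x t, 0 ≤ x → 0 ≤ t → LargestMinimizer (fun τ => Gpot ρb ub τ x t) (τS x t))
    (hρ0int : MeasureTheory.IntegrableOn ρ0 (Set.Ici 0))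
    (t : ℝ) (ht : 0 < t) :
    MonotoneOn (fun x => mpot ρ0 ρb ub Fm Gm ys τs x t) (Set.Ioi 0) ∧
    mpot ρ0 ρb ub Fm Gm ys τs 0 t = -∫ η in (0:ℝ)..t, ρb η * ub η ∧
    Filter.Tendsto
      (fun x => mpot ρ0 ρb ub Fm Gm ys τs x t - mpot ρ0 ρb ub Fm Gm ys τs 0 t)
      Filter.atTop
      (nhds ((∫ x in Set.Ioi (0:ℝ), ρ0 x) + ∫ η in (0:ℝ)..t, ρb η * ub η)) :=
  stmt19_general ρ0 u0 ρb ub hu0meas hρbmeas hubmeas hρ0pos hρbpos hubpos hρbloc hu0bdd hubbdd Fm Gm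
    hFm hGm ys τs hys hτs hρ0int t ht
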